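/- arXiv:2202.05611 — 3 statements merged into one kernel-verified Lean document; each statement's English description precedes it below -/
import Mathlib

section
/- Let X be a well-order and let α be a well-order with a least element 0_α. Then the exponentiation α^X, ordered lexicographically, is again a well-order; in particular, there is no infinite strictly descending sequence in α^X. -/
/-!
Every `ExpLt`-descent is a descent for the lexicographic order on lists over the well-founded
order `X ×ₗ α`. That order is not well-founded on all lists (`[b] > [a, b] > [a, a, b] > ⋯`),
but elements of `α^X` are strictly decreasing in their `X`-components, hence decreasing chains
in `X ×ₗ α`, and on decreasing chains it is well-founded by induction on the head
(`WellFounded.list_chain'`).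
-/

variable {X α : Type*}

/-- The lexicographic order on `α^X` (finite sequences of pairs):
`σ < τ` iff `τ` strictly extends `σ`, or at the least index `i` where they differ,
writing `(b, a) := σ_i` and `(b', a') := τ_i`, we have `b < b'` or (`b = b'` and `a < a'`). -/
def ExpLt [LT X] [LT α] (σ τ : List (X × α)) : Prop :=
  (σ ≠ τ ∧ σ <+: τ) ∨
  ∃ (i : ℕ) (b : X) (a : α) (b' : X) (a' : α),
    σ[i]? = some (b, a) ∧ τ[i]? = some (b', a') ∧
    (∀ j, j < i → σ[j]? = τ[j]?) ∧ (b, a) ≠ (b', a') ∧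
    (b < b' ∨ (b = b' ∧ a < a'))

/-- The underlying set of the exponentiation `α^X`: finite sequences
`⟨(b_0, a_0), …, (b_{n-1}, a_{n-1})⟩` with all `a_i ≠ 0_α = ⊥` and
`b_0 >_X b_1 >_X … >_X b_{n-1}`. -/
def ExpSet (X α : Type*) [LT X] [LE α] [OrderBot α] : Set (List (X × α)) :=
  {l | (∀ p ∈ l, p.2 ≠ ⊥) ∧ l.Chain' (fun p q => q.1 < p.1)}

namespace List

variable {β : Type*} {r : β → β → Prop} {l m : List β}

theorem IsPrefix.lex (h : l <+: m) (hne : l ≠ m) : Lex r l m := by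
  obtain ⟨t, rfl⟩ := h
  obtain ⟨b, t, rfl⟩ := exists_cons_of_ne_nil (by simpa using hne)
  simpa using Lex.append_left r (Lex.nil (a := b) (l := t)) l

theorem lex_of_getElem? {i : ℕ} {x y : β} (hl : l[i]? = some x) (hm : m[i]? = some y)
    (hpre : ∀ j < i, l[j]? = m[j]?) (hxy : r x y) : Lex r l m := by
  have htake : l.take i = m.take i := ext_getElem? fun j => by
    rcases lt_or_ge j i with hj | hj
    · simp [hj, hpre j hj]
    · simp [hj.not_gt]
  obtain ⟨hil, rfl⟩ := getElem?_eq_some_iff.mp hl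
  obtain ⟨him, rfl⟩ := getElem?_eq_some_iff.mp hm
  rw [← take_append_drop i l, ← take_append_drop i m, htake, drop_eq_getElem_cons hil,
    drop_eq_getElem_cons him]
  exact Lex.append_left r (Lex.rel hxy) _

end List

theorem ExpLt.lex [LT X] [LT α] {σ τ : List (X × α)} (h : ExpLt σ τ) :
    List.Lex (Prod.Lex (· < ·) (· < ·)) σ τ := by
  rcases h with ⟨hne, hpre⟩ | ⟨i, b, a, b', a', hσ, hτ, hagree, -, hlt⟩
  · exact hpre.lex hne
  · exact List.lex_of_getElem? hσ hτ hagree (Prod.lex_def.mpr hlt)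

theorem ExpSet.isChain_lex [LT X] [Preorder α] [OrderBot α] {σ : List (X × α)}
    (hσ : σ ∈ ExpSet X α) : σ.IsChain (flip (Prod.Lex (· < ·) (· < ·))) :=
  hσ.2.imp fun _ _ h => Prod.Lex.left _ _ h

/-- If `X` is a well-order and `α` is a well-order with a least element, then `α^X`
with the lexicographic order is well-founded; in particular, there is no infinite
strictly descending sequence in `α^X`. -/
theorem expWellOrder [LinearOrder X] [WellFoundedLT X]
    [LinearOrder α] [OrderBot α] [WellFoundedLT α] :
    WellFounded (fun σ τ : ExpSet X α => ExpLt σ.1 τ.1) ∧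
    ¬ ∃ f : ℕ → ExpSet X α, ∀ n, ExpLt (f (n + 1)).1 (f n).1 := by
  have hlex : WellFounded (List.lex_chains (Prod.Lex (α := X) (β := α) (· < ·) (· < ·))) :=
    (wellFounded_lt.prod_lex wellFounded_lt).list_chain'
  have wf : WellFounded (fun σ τ : ExpSet X α => ExpLt σ.1 τ.1) :=
    Subrelation.wf (fun h => h.lex)
      (InvImage.wf (fun σ : ExpSet X α => (⟨σ.1, ExpSet.isChain_lex σ.2⟩ : List.chains _)) hlex)
  exact ⟨wf, fun ⟨f, hf⟩ => (wellFounded_iff_isEmpty_descending_chain.mp wf).false ⟨f, hf⟩⟩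
end

section
/- Let X be a well-order, let α be a well-order with least element 0_α, and let (f_n) be a strictly descending sequence in α^X. Then f_0 is a nonempty sequence, and if x ∈ X denotes the greatest element of X with f_0(x) ≠ 0_α, then f_n(y) = 0_α for every n ∈ ℕ and every y ∈ X with y >_X x, and the set {f_n^x : n ∈ ℕ} is finite. -/
variable {X α : Type*}

/-- The non-strict order on `α^X`: `σ ≤ τ` iff `σ < τ` or `σ = τ`. -/
def ExpLe [LT X] [LT α] (σ τ : List (X × α)) : Prop :=
  ExpLt σ τ ∨ σ = τ

/-- `g^x`: the sequence obtained from `g` by removing all pairs `(y, a)` with `y <_X x`. -/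
def restrictAbove [LinearOrder X] (x : X) (g : List (X × α)) : List (X × α) :=
  g.filter (fun p => decide (¬ p.1 < x))

/-- `g(x)`: the unique `a` with `(x, a) ∈ g` if it exists, and `0_α = ⊥` otherwise. -/
def eval [LinearOrder X] [LE α] [OrderBot α] (g : List (X × α)) (x : X) : α :=
  ((g.find? (fun p => decide (p.1 = x))).map Prod.snd).getD ⊥

/-! No `f n` is empty, since `[]` is the least element of `α^X`, and the head of `f n` carries
its largest coordinate. The order compares heads first, so the heads form an antitone sequence in
the well-order `X ×ₗ α`, which takes only finitely many values. Hence no coordinate ever exceeds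
the head coordinate `x` of `f 0`, and `f_n^x` is determined by the head of `f n`. -/

theorem Antitone.finite_range {β : Type*} [PartialOrder β] [WellFoundedLT β] {u : ℕ → β}
    (hu : Antitone u) : (Set.range u).Finite := by
  obtain ⟨N, hN⟩ := WellFoundedLT.antitone_chain_condition hu
  refine ((Set.finite_Iic N).image u).subset ?_
  rintro _ ⟨n, rfl⟩
  rcases le_total n N with hn | hn
  · exact ⟨n, hn, rfl⟩
  · exact ⟨N, Set.self_mem_Iic, hN n hn⟩

theorem not_expLt_nil [LT X] [LT α] (σ : List (X × α)) : ¬ ExpLt σ [] := by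
  rintro (⟨hne, hpre⟩ | ⟨i, b, a, b', a', -, hi, -⟩)
  · exact hne (List.prefix_nil.mp hpre)
  · simp at hi

theorem ExpLt.toLex_head_le [Preorder X] [Preorder α] {p q : X × α} {σ τ : List (X × α)}
    (h : ExpLt (p :: σ) (q :: τ)) : toLex p ≤ toLex q := by
  rcases h with ⟨-, hpre⟩ | ⟨i, b, a, b', a', hσ, hτ, hagree, -, hlt⟩
  · rw [(List.cons_prefix_cons.mp hpre).1]
  · rcases i with _ | i
    · simp only [List.getElem?_cons_zero, Option.some.injEq] at hσ hτ
      subst hσ hτ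
      rcases hlt with hb | ⟨rfl, ha⟩
      · exact Prod.Lex.le_iff.mpr (Or.inl hb)
      · exact Prod.Lex.le_iff.mpr (Or.inr ⟨rfl, ha.le⟩)
    · have := hagree 0 i.succ_pos
      simp only [List.getElem?_cons_zero, Option.some.injEq] at this
      rw [this]

theorem fst_le_head_fst_of_mem_expSet [Preorder X] [LE α] [OrderBot α] {h : X × α}
    {t : List (X × α)} (hl : h :: t ∈ ExpSet X α) {p : X × α} (hp : p ∈ h :: t) :
    p.1 ≤ h.1 := by
  rcases List.mem_cons.mp hp with rfl | hp
  · exact le_rfl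
  · exact ((List.pairwise_cons.mp hl.2.pairwise).1 p hp).le

theorem eval_cons_self [LinearOrder X] [LE α] [OrderBot α] (h : X × α) (t : List (X × α)) :
    eval (h :: t) h.1 = h.2 := by
  simp [eval]

theorem eval_eq_bot_of_notMem [LinearOrder X] [LE α] [OrderBot α] {l : List (X × α)} {y : X}
    (hy : ∀ p ∈ l, p.1 ≠ y) : eval l y = ⊥ := by
  have : l.find? (fun p => decide (p.1 = y)) = none := List.find?_eq_none.mpr (by simpa using hy)
  simp [eval, this]

theorem restrictAbove_cons_of_head_fst_le [LinearOrder X] [LE α] [OrderBot α] {x : X}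
    {h : X × α} {t : List (X × α)} (hl : h :: t ∈ ExpSet X α) (hx : h.1 ≤ x) :
    restrictAbove x (h :: t) = if h.1 = x then [h] else [] := by
  have htail : restrictAbove x t = [] := List.filter_eq_nil_iff.mpr fun p hp => by
    simpa using ((List.pairwise_cons.mp hl.2.pairwise).1 p hp).trans_le hx
  simp only [restrictAbove] at htail ⊢
  rw [List.filter_cons, htail]
  simp [hx.ge_iff_eq]

/-- For a strictly descending sequence `(f_n)` in `α^X` (with `α` a well-order with
least element `⊥`): `f 0` is nonempty, and if `x` is the greatest element of `X` with
`(f 0)(x) ≠ ⊥`, then `(f n)(y) = ⊥` for all `n` and all `y >_X x`, and the set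
`{f_n^x : n ∈ ℕ}` is finite. -/
theorem greatest_coordinate [LinearOrder X] [WellFoundedLT X]
    [LinearOrder α] [OrderBot α] [WellFoundedLT α]
    (f : ℕ → List (X × α)) (hf : ∀ n, f n ∈ ExpSet X α)
    (hdesc : ∀ n, ExpLt (f (n + 1)) (f n)) :
    f 0 ≠ [] ∧
    ∀ x : X, eval (f 0) x ≠ ⊥ → (∀ y : X, eval (f 0) y ≠ ⊥ → y ≤ x) →
      (∀ (n : ℕ) (y : X), x < y → eval (f n) y = ⊥) ∧
      (Set.range fun n => restrictAbove x (f n)).Finite := by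
  have hne : ∀ n, f n ≠ [] := fun n h => not_expLt_nil _ (h ▸ hdesc n)
  refine ⟨hne 0, fun x _ hmax => ?_⟩
  choose hd tl hcons using fun n => List.exists_cons_of_ne_nil (hne n)
  have hf' : ∀ n, hd n :: tl n ∈ ExpSet X α := fun n => hcons n ▸ hf n
  have hanti : Antitone fun n => toLex (hd n) := antitone_nat_of_succ_le fun n =>
    (show ExpLt (hd (n + 1) :: tl (n + 1)) (hd n :: tl n) from
      hcons n ▸ hcons (n + 1) ▸ hdesc n).toLex_head_le
  have hhd0 : (hd 0).1 ≤ x := hmax _ <| by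
    rw [hcons, eval_cons_self]
    exact (hf' 0).1 _ List.mem_cons_self
  have hhd : ∀ n, (hd n).1 ≤ x := fun n =>
    (Prod.Lex.monotone_fst _ _ (hanti n.zero_le)).trans hhd0
  refine ⟨fun n y hxy => eval_eq_bot_of_notMem fun p hp => ?_, ?_⟩
  · rw [hcons] at hp
    exact ((fst_le_head_fst_of_mem_expSet (hf' n) hp).trans (hhd n)).trans_lt hxy |>.ne
  · have hfin : (Set.range hd).Finite := by
      simpa [← Set.range_comp, Function.comp_def] using hanti.finite_range.image ofLex
    have hrestrict : (fun n => restrictAbove x (f n)) =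
        (fun h : X × α => if h.1 = x then [h] else []) ∘ hd := by
      funext n
      simp only [Function.comp, hcons, restrictAbove_cons_of_head_fst_le (hf' n) (hhd n)]
    rw [hrestrict, Set.range_comp]
    exact hfin.image _
end

section
/- Let X be a well-order, let α be a well-order with least element 0_α, and let (f_n) be a strictly descending sequence in α^X. Suppose x ∈ X is neither the least element of X nor the immediate successor of any element of X, and suppose the set {f_n^x : n ∈ ℕ} is finite. Then there exists y ∈ X with y <_X x such that the set {f_n^y : n ∈ ℕ} is finite. -/
variable {X α : Type*}

/-!
Write `<ₗ` for the lexicographic order on lists induced by the lexicographic order on pairs;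
`ExpLt` implies it. On sorted lists `g ↦ g^z` is `takeWhile`, hence a prefix of `g`, and it is
`<ₗ`-monotone. So `n ↦ f n^x` is non-increasing with finitely many values, hence equal to some `v`
from some `N` on. The list `f N` strictly extends `v`, for otherwise `v = f (N+1)^x` would be a
prefix of `f (N+1) <ₗ f N = v`. The entry `p` of `f N` following `v` has `p.1 < x`, and as `x` is
a limit some `z` lies strictly between. For `n ≥ N`, `f n^z` is `<ₗ`-below `f N^z = v` and extends
`f n^x = v`, hence equals `v`.
-/

section Sequences

variable {β : Type*} {r : β → β → Prop} {g : ℕ → β}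

theorem Nat.rel_or_eq_of_forall_rel_or_eq_succ [IsTrans β r]
    (hg : ∀ n, r (g (n + 1)) (g n) ∨ g (n + 1) = g n) {m n : ℕ} (hmn : m ≤ n) :
    r (g n) (g m) ∨ g n = g m := by
  induction n, hmn using Nat.le_induction with
  | base => exact Or.inr rfl
  | succ n _ ih =>
    rcases hg n with hstep | hstep <;> rcases ih with ih | ih
    · exact Or.inl (_root_.trans hstep ih)
    · exact Or.inl (ih ▸ hstep)
    · exact Or.inl (hstep ▸ ih)
    · exact Or.inr (hstep.trans ih)

theorem exists_forall_ge_eq_of_finite_range [IsStrictOrder β r]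
    (hg : ∀ n, r (g (n + 1)) (g n) ∨ g (n + 1) = g n) (hfin : (Set.range g).Finite) :
    ∃ N, ∀ n ≥ N, g n = g N := by
  obtain ⟨⟨_, N, rfl⟩, -, hmin⟩ :=
    (hfin.wellFoundedOn (r := r)).has_min Set.univ ⟨⟨g 0, 0, rfl⟩, trivial⟩
  exact ⟨N, fun n hn => (Nat.rel_or_eq_of_forall_rel_or_eq_succ hg hn).resolve_left
    (hmin ⟨g n, n, rfl⟩ trivial)⟩

theorem Set.finite_range_of_forall_ge_eq {N : ℕ} {c : β} (h : ∀ n ≥ N, g n = c) :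
    (Set.range g).Finite := by
  refine (((Set.finite_Iio N).image g).insert c).subset ?_
  rintro _ ⟨n, rfl⟩
  rcases lt_or_ge n N with hn | hn
  · exact Or.inr ⟨n, hn, rfl⟩
  · exact Or.inl (h n hn)

end Sequences

namespace List

variable {β : Type*} {r : β → β → Prop}

instance [Std.Irrefl r] [IsTrans β r] : IsStrictOrder (List β) (Lex r) where
  irrefl := lex_irrefl (irrefl_of r)
  trans _ _ _ := lex_trans (_root_.trans_of r)

theorem lex_of_getElem?_eq_some {l₁ l₂ : List β} {i : ℕ} {a b : β}
    (h₁ : l₁[i]? = some a) (h₂ : l₂[i]? = some b) (htake : ∀ j < i, l₁[j]? = l₂[j]?)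
    (hab : r a b) : Lex r l₁ l₂ := by
  obtain ⟨hi₁, rfl⟩ := getElem?_eq_some_iff.1 h₁
  obtain ⟨hi₂, rfl⟩ := getElem?_eq_some_iff.1 h₂
  have htake : l₁.take i = l₂.take i := ext_getElem? fun j => by
    simp only [getElem?_take]
    split_ifs with hj
    exacts [htake j hj, rfl]
  rw [← take_append_drop i l₁, ← take_append_drop i l₂, htake, drop_eq_getElem_cons hi₁,
    drop_eq_getElem_cons hi₂]
  exact Lex.append_left _ (Lex.rel hab) _

theorem not_lex_of_prefix [Std.Irrefl r] {l₁ l₂ : List β} (h : l₁ <+: l₂) : ¬ Lex r l₂ l₁ := by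
  obtain ⟨t, rfl⟩ := h
  induction l₁ with
  | nil => exact not_lex_nil
  | cons a l ih => rw [cons_append, lex_cons_iff]; exact ih

theorem filter_eq_takeWhile_of_pairwise {p : β → Bool} {l : List β}
    (h : l.Pairwise fun a b => p a = false → p b = false) : l.filter p = l.takeWhile p := by
  induction l with
  | nil => rfl
  | cons a l ih =>
    rw [pairwise_cons] at h
    cases ha : p a
    · rw [filter_cons_of_neg (by simp [ha]), takeWhile_cons_of_neg (by simp [ha]),
        filter_eq_nil_iff]
      exact fun b hb => by simp [h.1 b hb ha]
    · rw [filter_cons_of_pos ha, takeWhile_cons_of_pos ha, ih h.2]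

theorem lex_or_eq_takeWhile {p : β → Bool} (hp : ∀ a b, r a b → p a → p b) {l₁ l₂ : List β}
    (h : Lex r l₁ l₂ ∨ l₁ = l₂) :
    Lex r (l₁.takeWhile p) (l₂.takeWhile p) ∨ l₁.takeWhile p = l₂.takeWhile p := by
  obtain h | rfl := h
  · induction h with
    | nil => exact (lex_nil_or_eq_nil _).imp_right Eq.symm
    | @rel a l₁ b l₂ hab =>
      by_cases ha : p a
      · rw [takeWhile_cons_of_pos ha, takeWhile_cons_of_pos (hp a b hab ha)]
        exact Or.inl (Lex.rel hab)
      · rw [takeWhile_cons_of_neg ha]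
        exact (lex_nil_or_eq_nil _).imp_right Eq.symm
    | @cons a l₁ l₂ _ ih =>
      by_cases ha : p a
      · rw [takeWhile_cons_of_pos ha, takeWhile_cons_of_pos ha]
        exact ih.imp Lex.cons (congrArg _)
      · simp [takeWhile_cons_of_neg ha]
  · exact Or.inr rfl

theorem takeWhile_prefix_takeWhile {p q : β → Bool} (hpq : ∀ a, p a → q a) (l : List β) :
    l.takeWhile p <+: l.takeWhile q := by
  induction l with
  | nil => exact prefix_rfl
  | cons a l ih =>
    by_cases hp : p a
    · rw [takeWhile_cons_of_pos hp, takeWhile_cons_of_pos (hpq a hp)]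
      exact prefix_cons_inj a |>.2 ih
    · rw [takeWhile_cons_of_neg hp]
      exact nil_prefix

theorem takeWhile_eq_of_dropWhile_eq_cons {p q : β → Bool} {l t : List β} {a : β}
    (hpq : ∀ b, p b → q b) (hl : l.dropWhile p = a :: t) (ha : q a = false) :
    l.takeWhile q = l.takeWhile p := by
  conv_lhs => rw [← takeWhile_append_dropWhile (p := p) (l := l), hl]
  rw [takeWhile_append_of_pos fun b hb => hpq b (mem_takeWhile_imp hb),
    takeWhile_cons_of_neg (by simp [ha]), append_nil]

theorem exists_dropWhile_eq_cons_of_lex [Std.Irrefl r] {p : β → Bool} {l₁ l₂ : List β}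
    (h : Lex r l₁ l₂) (htake : l₁.takeWhile p = l₂.takeWhile p) :
    ∃ a t, l₂.dropWhile p = a :: t ∧ p a = false := by
  have hne : l₂.dropWhile p ≠ [] := fun hnil => by
    refine not_lex_of_prefix ?_ h
    rw [← takeWhile_append_dropWhile (p := p) (l := l₂), hnil, append_nil, ← htake]
    exact takeWhile_prefix _
  obtain ⟨a, t, hat⟩ := ne_nil_iff_exists_cons.1 hne
  have ha := head?_dropWhile_not p l₂
  rw [hat] at ha
  exact ⟨a, t, hat, ha⟩

end List

local infix:50 " <ₗ " => List.Lex (Prod.Lex (· < ·) (· < ·))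

theorem lex_of_expLt [LT X] [LT α] {σ τ : List (X × α)} (h : ExpLt σ τ) : σ <ₗ τ := by
  obtain ⟨hne, t, rfl⟩ | ⟨i, b, a, b', a', hσ, hτ, htake, -, hlt⟩ := h
  · have ht : t ≠ [] := by rintro rfl; simp at hne
    simpa using List.Lex.append_left _ ((List.lex_nil_or_eq_nil t).resolve_right ht) σ
  · exact List.lex_of_getElem?_eq_some hσ hτ htake (Prod.lex_def.2 hlt)

section Restriction

variable [LinearOrder X]

def notBelow (z : X) (p : X × α) : Bool := decide (¬ p.1 < z)

@[simp]
theorem notBelow_eq_true {z : X} {p : X × α} : notBelow z p = true ↔ z ≤ p.1 := by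
  simp [notBelow]

@[simp]
theorem notBelow_eq_false {z : X} {p : X × α} : notBelow z p = false ↔ p.1 < z := by
  simp [notBelow]

theorem notBelow_of_le {z x : X} (hzx : z ≤ x) (p : X × α) : notBelow x p → notBelow z p := by
  simpa using hzx.trans

theorem notBelow_of_prodLex [Preorder α] (z : X) (p q : X × α)
    (hpq : Prod.Lex (· < ·) (· < ·) p q) : notBelow z p → notBelow z q := by
  simp only [notBelow_eq_true]
  rcases Prod.lex_def.1 hpq with h | ⟨h, -⟩
  exacts [fun hp => hp.trans h.le, h ▸ id]

theorem restrictAbove_eq_takeWhile (z : X) {l : List (X × α)}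
    (hl : l.IsChain fun p q => q.1 < p.1) :
    restrictAbove z l = l.takeWhile (notBelow z) := by
  have : Trans (fun p q : X × α => q.1 < p.1) (fun p q : X × α => q.1 < p.1)
      (fun p q : X × α => q.1 < p.1) :=
    ⟨fun h₁ h₂ => h₂.trans h₁⟩
  refine List.filter_eq_takeWhile_of_pairwise (p := notBelow z) (hl.pairwise.imp fun hpq hp => ?_)
  simp only [notBelow_eq_false] at hp ⊢
  exact hpq.trans hp

theorem takeWhile_notBelow_eq_of_ge [Preorder α] {f : ℕ → List (X × α)}
    (hlex : ∀ n, f (n + 1) <ₗ f n) {N : ℕ} {x z : X} {p : X × α} {t : List (X × α)}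
    (hN : ∀ n ≥ N, (f n).takeWhile (notBelow x) = (f N).takeWhile (notBelow x))
    (hpt : (f N).dropWhile (notBelow x) = p :: t) (hpz : p.1 < z) (hzx : z ≤ x)
    {n : ℕ} (hn : N ≤ n) :
    (f n).takeWhile (notBelow z) = (f N).takeWhile (notBelow x) := by
  have hzN : (f N).takeWhile (notBelow z) = (f N).takeWhile (notBelow x) :=
    List.takeWhile_eq_of_dropWhile_eq_cons (notBelow_of_le hzx) hpt (by simpa using hpz)
  refine hzN ▸ (List.lex_or_eq_takeWhile (notBelow_of_prodLex z)
    (Nat.rel_or_eq_of_forall_rel_or_eq_succ (fun n => Or.inl (hlex n)) hn)).resolve_left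
    (List.not_lex_of_prefix ?_)
  rw [hzN, ← hN n hn]
  exact List.takeWhile_prefix_takeWhile (notBelow_of_le hzx) _

end Restriction

theorem limit_case_general [LinearOrder X]
    [LinearOrder α] [OrderBot α]
    (f : ℕ → List (X × α)) (hf : ∀ n, f n ∈ ExpSet X α)
    (hdesc : ∀ n, ExpLt (f (n + 1)) (f n))
    (x : X)
    (hnotsucc : ∀ y : X, ¬ (y < x ∧ ∀ z : X, y < z → x ≤ z))
    (hfin : (Set.range fun n => restrictAbove x (f n)).Finite) :
    ∃ y : X, y < x ∧ (Set.range fun n => restrictAbove y (f n)).Finite := by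
  have hrestrict (z : X) :
      (fun n => restrictAbove z (f n)) = fun n => (f n).takeWhile (notBelow z) :=
    funext fun n => restrictAbove_eq_takeWhile z (hf n).2
  have hlex (n : ℕ) := lex_of_expLt (hdesc n)
  obtain ⟨N, hN⟩ := exists_forall_ge_eq_of_finite_range
    (fun n => List.lex_or_eq_takeWhile (notBelow_of_prodLex x) (Or.inl (hlex n)))
    (hrestrict x ▸ hfin)
  obtain ⟨p, t, hpt, hpx⟩ := List.exists_dropWhile_eq_cons_of_lex (hlex N) (hN (N + 1) N.le_succ)
  obtain ⟨z, hpz, hzx⟩ : ∃ z, p.1 < z ∧ z < x := by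
    simpa [notBelow_eq_false.1 hpx] using hnotsucc p.1
  exact ⟨z, hzx, hrestrict z ▸ Set.finite_range_of_forall_ge_eq
    fun n hn => takeWhile_notBelow_eq_of_ge hlex hN hpt hpz hzx.le hn⟩

/-- Limit case: if `x ∈ X` is neither the least element of `X` nor the immediate
successor of any element of `X`, and, for a strictly descending sequence `(f_n)` in
`α^X`, the set `{f_n^x : n ∈ ℕ}` is finite, then there is `y <_X x` such that
`{f_n^y : n ∈ ℕ}` is finite. -/
theorem limit_case [LinearOrder X] [WellFoundedLT X]
    [LinearOrder α] [OrderBot α] [WellFoundedLT α]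
    (f : ℕ → List (X × α)) (hf : ∀ n, f n ∈ ExpSet X α)
    (hdesc : ∀ n, ExpLt (f (n + 1)) (f n))
    (x : X) (hnotleast : ¬ ∀ z : X, x ≤ z)
    (hnotsucc : ∀ y : X, ¬ (y < x ∧ ∀ z : X, y < z → x ≤ z))
    (hfin : (Set.range fun n => restrictAbove x (f n)).Finite) :
    ∃ y : X, y < x ∧ (Set.range fun n => restrictAbove y (f n)).Finite :=
  limit_case_general f hf hdesc x hnotsucc hfin
end
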